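/- arXiv:math-ph/0309033 — 4 statements merged into one kernel-verified Lean document; each statement's English description precedes it below -/
import Mathlib

section
/- For any unit vector γ ∈ ℝ³, let M = α₁γ₁ + α₂γ₂ + α₃γ₃ + I and β = diag(1,1,-1,-1). Then M β M = 0 (the 4×4 zero matrix). -/
open Matrix
set_option autoImplicit false

noncomputable def pauli1 : Matrix (Fin 2) (Fin 2) ℂ := !![0, 1; 1, 0]
noncomputable def pauli2 : Matrix (Fin 2) (Fin 2) ℂ := !![0, -Complex.I; Complex.I, 0]
noncomputable def pauli3 : Matrix (Fin 2) (Fin 2) ℂ := !![1, 0; 0, -1]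

noncomputable def diracAlpha1 : Matrix (Fin 2 ⊕ Fin 2) (Fin 2 ⊕ Fin 2) ℂ :=
  Matrix.fromBlocks 0 pauli1 pauli1 0
noncomputable def diracAlpha2 : Matrix (Fin 2 ⊕ Fin 2) (Fin 2 ⊕ Fin 2) ℂ :=
  Matrix.fromBlocks 0 pauli2 pauli2 0
noncomputable def diracAlpha3 : Matrix (Fin 2 ⊕ Fin 2) (Fin 2 ⊕ Fin 2) ℂ :=
  Matrix.fromBlocks 0 pauli3 pauli3 0

noncomputable def diracBeta : Matrix (Fin 2 ⊕ Fin 2) (Fin 2 ⊕ Fin 2) ℂ :=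
  Matrix.fromBlocks 1 0 0 (-1)

theorem stmt2 (γ₁ γ₂ γ₃ : ℝ) (h : γ₁ ^ 2 + γ₂ ^ 2 + γ₃ ^ 2 = 1) :
    ((γ₁ : ℂ) • diracAlpha1 + (γ₂ : ℂ) • diracAlpha2 + (γ₃ : ℂ) • diracAlpha3 + 1) * diracBeta *
      ((γ₁ : ℂ) • diracAlpha1 + (γ₂ : ℂ) • diracAlpha2 + (γ₃ : ℂ) • diracAlpha3 + 1) = 0 := by
  have hc : (γ₁ : ℂ) ^ 2 + (γ₂ : ℂ) ^ 2 + (γ₃ : ℂ) ^ 2 = 1 := by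
    have := congrArg (Complex.ofReal) h
    push_cast at this
    exact this
  ext i j
  rcases i with i | i <;> rcases j with j | j <;> fin_cases i <;> fin_cases j <;>
    simp [mul_apply, Fintype.sum_sum_type, Fin.sum_univ_succ, diracAlpha1, diracAlpha2,
      diracAlpha3, diracBeta, pauli1, pauli2, pauli3, Matrix.one_apply] <;>
    ring_nf <;> simp only [Complex.I_sq] <;> ring_nf <;>
    first | linear_combination hc | linear_combination (2:ℂ)*hc | linear_combination (-2:ℂ)*hc | linear_combination -hc
end

section
/- Let f₁, f₂ be vectors in ℂ^m with f₁ + f₂ = e₁ (the first standard basis vector), and suppose ‖f₁‖² ≥ c² + ‖f₂‖² for some c > 0. Then |⟨f₁, e₁⟩|² ≥ c² + |⟨f₂, e₁⟩|²; in particular ⟨f₁, e₁⟩ ≠ 0. -/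
/-! If `x + y = e` with `‖e‖ = 1`, expanding `‖e - x‖²` shows that both `‖x‖² - ‖y‖²` and
`|⟪x, e⟫|² - |⟪y, e⟫|²` equal `2 Re ⟪x, e⟫ - 1`, the second because `⟪y, e⟫ = 1 - ⟪x, e⟫`.
So the hypothesis on the norms transfers verbatim to the first coordinates. -/

open scoped InnerProductSpace
set_option autoImplicit false

section
variable {𝕜 E : Type*} [RCLike 𝕜] [NormedAddCommGroup E] [InnerProductSpace 𝕜 E]

theorem norm_sq_sub_norm_sq_of_add_eq_of_norm_eq_one {x y e : E} (he : ‖e‖ = 1)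
    (hxy : x + y = e) : ‖x‖ ^ 2 - ‖y‖ ^ 2 = 2 * RCLike.re ⟪x, e⟫_𝕜 - 1 := by
  have hy : y = e - x := eq_sub_of_add_eq' hxy
  rw [hy, @norm_sub_sq 𝕜, he, inner_re_symm]
  ring

theorem RCLike.norm_sq_sub_norm_sq_one_sub (a : 𝕜) :
    ‖a‖ ^ 2 - ‖1 - a‖ ^ 2 = 2 * RCLike.re a - 1 := by
  simpa using norm_sq_sub_norm_sq_of_add_eq_of_norm_eq_one (𝕜 := 𝕜) (x := a) (y := 1 - a)
    norm_one (add_sub_cancel a 1)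

theorem norm_sq_inner_sub_norm_sq_inner_of_add_eq_of_norm_eq_one {x y e : E} (he : ‖e‖ = 1)
    (hxy : x + y = e) : ‖⟪x, e⟫_𝕜‖ ^ 2 - ‖⟪y, e⟫_𝕜‖ ^ 2 = ‖x‖ ^ 2 - ‖y‖ ^ 2 := by
  have hee : ⟪e, e⟫_𝕜 = 1 := by rw [inner_self_eq_norm_sq_to_K, he]; simp
  have hy : ⟪y, e⟫_𝕜 = 1 - ⟪x, e⟫_𝕜 := by rw [← hee, ← hxy, inner_add_left]; ring
  rw [hy, RCLike.norm_sq_sub_norm_sq_one_sub,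
    norm_sq_sub_norm_sq_of_add_eq_of_norm_eq_one (𝕜 := 𝕜) he hxy]

end

theorem stmt8 (m : ℕ) (f₁ f₂ : EuclideanSpace ℂ (Fin (m + 1))) (c : ℝ) (hc : 0 < c)
    (hsum : f₁ + f₂ = EuclideanSpace.single 0 1)
    (hnorm : ‖f₁‖ ^ 2 ≥ c ^ 2 + ‖f₂‖ ^ 2) :
    ‖⟪f₁, EuclideanSpace.single 0 1⟫_ℂ‖ ^ 2 ≥
      c ^ 2 + ‖⟪f₂, EuclideanSpace.single 0 1⟫_ℂ‖ ^ 2 ∧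
    ⟪f₁, EuclideanSpace.single 0 1⟫_ℂ ≠ 0 := by
  have he : ‖(EuclideanSpace.single 0 1 : EuclideanSpace ℂ (Fin (m + 1)))‖ = 1 := by
    rw [EuclideanSpace.single, PiLp.norm_single, norm_one]
  have hkey := norm_sq_inner_sub_norm_sq_inner_of_add_eq_of_norm_eq_one (𝕜 := ℂ) he hsum
  have hcoord : ‖⟪f₁, EuclideanSpace.single 0 1⟫_ℂ‖ ^ 2 ≥
      c ^ 2 + ‖⟪f₂, EuclideanSpace.single 0 1⟫_ℂ‖ ^ 2 := by linarith
  refine ⟨hcoord, fun h₀ => ?_⟩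
  rw [h₀, norm_zero] at hcoord
  nlinarith [sq_nonneg ‖⟪f₂, EuclideanSpace.single 0 1⟫_ℂ‖]
end

section
/- There exists a constant C such that for all x ∈ ℝ³ and all ρ with 1 < ρ ≤ 2|x|/3, the surface integral over the sphere {|y| = ρ} satisfies ∫_{|y|=ρ} e^{−|x−y|−|y|} dτ_y ≤ C ρ e^{−|x|}. -/
set_option autoImplicit false

open MeasureTheory

/-!
Put `e = ‖x‖⁻¹ • x`. Since `‖x‖ - ⟪e, y⟫ = ⟪e, x - y⟫ ≤ ‖x - y‖`, the integrand is at most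
`exp (-‖x‖) * exp (⟪e, y⟫ - ρ)` on the sphere of radius `ρ`. By the layer-cake formula the
integral of `exp (⟪e, y⟫ - ρ)` is bounded by `∫₀¹ area {ρ + log s ≤ ⟪e, y⟫} ds`, and a spherical
cap `{ρ - t ≤ ⟪e, y⟫}` has area `O(ρ t)`: for `t ≤ ρ / 2` it is the image of a planar square of
area `8 ρ t` under the graph map `v ↦ (√(ρ² - |v|²), v)`, which is Lipschitz away from the
equator, and for larger `t` the whole sphere, covered by six caps of height `ρ / 2`, has area
`O(ρ²) = O(ρ t)`. As `∫₀¹ -log s ds = 1`, the integral is `O(ρ)`.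
-/

open Metric Real
open scoped RealInnerProductSpace NNReal ENNReal

local notation "ℝ³" => EuclideanSpace ℝ (Fin 3)

lemma norm_sub_inner_le_norm_sub {E : Type*} [NormedAddCommGroup E] [InnerProductSpace ℝ E]
    (x y : E) : ‖x‖ - ⟪‖x‖⁻¹ • x, y⟫ ≤ ‖x - y‖ := by
  rcases eq_or_ne x 0 with rfl | hx
  · simp
  calc ‖x‖ - ⟪‖x‖⁻¹ • x, y⟫ = ⟪‖x‖⁻¹ • x, x - y⟫ := by
        simp only [inner_sub_right, real_inner_smul_left, real_inner_self_eq_norm_sq]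
        field_simp
    _ ≤ ‖x - y‖ :=
        (real_inner_le_norm _ _).trans_eq
          (by rw [show ‖‖x‖⁻¹ • x‖ = 1 from norm_smul_inv_norm hx, one_mul])

lemma inner_le_of_mem_sphere {E : Type*} [NormedAddCommGroup E] [InnerProductSpace ℝ E] {e y : E}
    (he : ‖e‖ = 1) {ρ : ℝ} (hy : y ∈ sphere 0 ρ) : ⟪e, y⟫ ≤ ρ := by
  simpa [he, mem_sphere_zero_iff_norm.1 hy] using real_inner_le_norm e y

lemma integral_le_of_measureReal_lt_le_mul_neg_log {α : Type*} [MeasurableSpace α]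
    {μ : Measure α} {g : α → ℝ} {K : ℝ} (hg : Integrable g μ) (hg0 : 0 ≤ᵐ[μ] g)
    (hg1 : ∀ᵐ a ∂μ, g a ≤ 1) (hlevel : ∀ s ∈ Set.Ioc (0 : ℝ) 1, μ.real {a | s < g a} ≤ K * -log s) :
    ∫ a, g a ∂μ ≤ K := by
  have hlog : ∫ s in Set.Ioc (0 : ℝ) 1, K * -log s = K := by
    rw [← intervalIntegral.integral_of_le zero_le_one, intervalIntegral.integral_const_mul,
      intervalIntegral.integral_neg, integral_log]
    simp
  have hbound : ∀ s ∈ Set.Ioi (0 : ℝ),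
      μ.real {a | s < g a} ≤ Set.indicator (Set.Ioc 0 1) (fun s => K * -log s) s := by
    intro s hs
    rcases le_or_gt s 1 with hs1 | hs1
    · rw [Set.indicator_of_mem (Set.mem_Ioc.2 ⟨hs, hs1⟩)]
      exact hlevel s ⟨hs, hs1⟩
    · have hnull : μ {a | s < g a} = 0 :=
        measure_mono_null (fun a ha => not_le.2 (hs1.trans ha)) (ae_iff.1 hg1)
      rw [measureReal_def, hnull, Set.indicator_of_notMem fun h => (not_le.2 hs1) h.2]
      simp
  calc ∫ a, g a ∂μ = ∫ s in Set.Ioi 0, μ.real {a | s < g a} := hg.integral_eq_integral_meas_lt hg0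
    _ ≤ ∫ s in Set.Ioi 0, Set.indicator (Set.Ioc 0 1) (fun s => K * -log s) s := by
        refine integral_mono_of_nonneg (ae_of_all _ fun _ => measureReal_nonneg) ?_
          ((ae_restrict_iff' measurableSet_Ioi).2 (ae_of_all _ hbound))
        refine (IntegrableOn.integrable_indicator ?_ measurableSet_Ioc).restrict
        have hint : IntervalIntegrable (fun s => K * -log s) volume 0 1 :=
          (intervalIntegral.intervalIntegrable_log').neg.const_mul K
        exact (intervalIntegrable_iff_integrableOn_Ioc_of_le zero_le_one).1 hint
    _ = K := by
        rw [setIntegral_indicator measurableSet_Ioc,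
          Set.inter_eq_self_of_subset_right Set.Ioc_subset_Ioi_self, hlog]

namespace SphereChart

-- The sup norm on `Fin 2 → ℝ` is used because there `μH[2]` is Lebesgue measure.
noncomputable def height (ρ : ℝ) (v : Fin 2 → ℝ) : ℝ := √(ρ ^ 2 - (v 0 ^ 2 + v 1 ^ 2))

noncomputable def chart (ρ : ℝ) (v : Fin 2 → ℝ) : ℝ³ := !₂[height ρ v, v 0, v 1]

variable {ρ : ℝ}

lemma height_sq {v : Fin 2 → ℝ} (hρ : 0 < ρ) (hv : ρ / 2 ≤ height ρ v) :
    height ρ v ^ 2 = ρ ^ 2 - (v 0 ^ 2 + v 1 ^ 2) :=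
  sq_sqrt (sqrt_pos.1 ((half_pos hρ).trans_le hv)).le

lemma abs_le_of_le_height {v : Fin 2 → ℝ} (hρ : 0 < ρ) (hv : ρ / 2 ≤ height ρ v) (i : Fin 2) :
    |v i| ≤ ρ := by
  have h := height_sq hρ hv
  refine abs_le_of_sq_le_sq ?_ hρ.le
  fin_cases i <;> simp <;> nlinarith [sq_nonneg (v 0), sq_nonneg (v 1)]

lemma abs_height_sub_le {u v : Fin 2 → ℝ} (hρ : 0 < ρ) (hu : ρ / 2 ≤ height ρ u)
    (hv : ρ / 2 ≤ height ρ v) : |height ρ v - height ρ u| ≤ 4 * dist v u := by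
  have hd : ∀ i, |v i - u i| ≤ dist v u := fun i => dist_le_pi_dist v u i
  have hsum : ∀ i, |u i + v i| ≤ 2 * ρ := fun i =>
    (abs_add_le _ _).trans (by linarith [abs_le_of_le_height hρ hu i, abs_le_of_le_height hρ hv i])
  have hfactor : (height ρ v - height ρ u) * (height ρ v + height ρ u) =
      (u 0 - v 0) * (u 0 + v 0) + (u 1 - v 1) * (u 1 + v 1) := by
    linear_combination height_sq hρ hv - height_sq hρ hu
  have hbound : |(u 0 - v 0) * (u 0 + v 0) + (u 1 - v 1) * (u 1 + v 1)| ≤ ρ * (4 * dist v u) := by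
    refine (abs_add_le _ _).trans ?_
    rw [abs_mul, abs_mul, abs_sub_comm (u 0), abs_sub_comm (u 1)]
    nlinarith [mul_le_mul (hd 0) (hsum 0) (abs_nonneg _) dist_nonneg,
      mul_le_mul (hd 1) (hsum 1) (abs_nonneg _) dist_nonneg]
  rw [← hfactor, abs_mul, abs_of_pos (by linarith : 0 < height ρ v + height ρ u)] at hbound
  refine le_of_mul_le_mul_right ?_ hρ
  nlinarith [abs_nonneg (height ρ v - height ρ u)]

lemma lipschitzOnWith_chart (hρ : 0 < ρ) :
    LipschitzOnWith 5 (chart ρ) {v | ρ / 2 ≤ height ρ v} := by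
  refine LipschitzOnWith.of_dist_le_mul fun v hv u hu => ?_
  have hd : ∀ i, |v i - u i| ≤ dist v u := fun i => dist_le_pi_dist v u i
  have hh := abs_height_sub_le hρ hu hv
  rw [EuclideanSpace.dist_eq, Fin.sum_univ_three, sqrt_le_iff]
  refine ⟨by positivity, ?_⟩
  simp only [chart, Matrix.cons_val_zero, Matrix.cons_val_one, Matrix.cons_val, Real.dist_eq,
    sq_abs, NNReal.coe_ofNat]
  nlinarith [sq_abs (v 0 - u 0), sq_abs (v 1 - u 1), sq_abs (height ρ v - height ρ u),
    abs_nonneg (v 0 - u 0), abs_nonneg (v 1 - u 1), abs_nonneg (height ρ v - height ρ u),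
    mul_le_mul (hd 0) (hd 0) (abs_nonneg _) dist_nonneg,
    mul_le_mul (hd 1) (hd 1) (abs_nonneg _) dist_nonneg,
    mul_le_mul hh hh (abs_nonneg _) (by positivity : (0:ℝ) ≤ 4 * dist v u)]

end SphereChart

def sphericalCap {E : Type*} [NormedAddCommGroup E] [InnerProductSpace ℝ E] (e : E) (ρ t : ℝ) :
    Set E :=
  {y | ‖y‖ = ρ ∧ ρ - t ≤ ⟪e, y⟫}

open SphereChart in
lemma sphericalCap_single_subset_image_chart {ρ t : ℝ} (ht : 0 ≤ t) (htρ : t ≤ ρ / 2) :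
    sphericalCap (EuclideanSpace.single 0 1 : ℝ³) ρ t ⊆
      chart ρ '' ({v | ρ / 2 ≤ height ρ v} ∩ closedBall 0 √(2 * ρ * t)) := by
  rintro y ⟨hy, hy0⟩
  rw [EuclideanSpace.inner_single_left, map_one, one_mul] at hy0
  have hnorm : y 0 ^ 2 + y 1 ^ 2 + y 2 ^ 2 = ρ ^ 2 := by
    rw [← hy, EuclideanSpace.real_norm_sq_eq, Fin.sum_univ_three]
  have hheight : height ρ ![y 1, y 2] = y 0 := by
    rw [height, show ρ ^ 2 - _ = y 0 ^ 2 by simp; linarith]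
    exact sqrt_sq (by linarith)
  refine ⟨![y 1, y 2], ⟨?_, ?_⟩, ?_⟩
  · show ρ / 2 ≤ height ρ _
    linarith
  · rw [mem_closedBall_zero_iff, pi_norm_le_iff_of_nonneg (sqrt_nonneg _)]
    intro i
    rw [Real.norm_eq_abs]
    refine abs_le_sqrt ?_
    fin_cases i <;> simp <;> nlinarith
  · ext i
    fin_cases i <;> simp [chart, hheight]

open SphereChart in
lemma hausdorffMeasure_sphericalCap_single_le {ρ t : ℝ} (hρ : 0 < ρ) (ht : 0 ≤ t)
    (htρ : t ≤ ρ / 2) :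
    μH[2] (sphericalCap (EuclideanSpace.single 0 1 : ℝ³) ρ t) ≤ ENNReal.ofReal (200 * ρ * t) := by
  have hvol : (μH[2] : Measure (Fin 2 → ℝ)) = volume := by
    rw [← hausdorffMeasure_pi_real, Fintype.card_fin, Nat.cast_ofNat]
  calc μH[2] (sphericalCap (EuclideanSpace.single 0 1 : ℝ³) ρ t)
      ≤ μH[2] (chart ρ '' ({v | ρ / 2 ≤ height ρ v} ∩ closedBall 0 √(2 * ρ * t))) :=
        measure_mono (sphericalCap_single_subset_image_chart ht htρ)
    _ ≤ (5 : ℝ≥0) ^ (2 : ℝ) * μH[2] ({v | ρ / 2 ≤ height ρ v} ∩ closedBall 0 √(2 * ρ * t)) :=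
        ((lipschitzOnWith_chart hρ).mono Set.inter_subset_left).hausdorffMeasure_image_le
          zero_le_two
    _ ≤ (5 : ℝ≥0) ^ (2 : ℝ) * volume (closedBall (0 : Fin 2 → ℝ) √(2 * ρ * t)) := by
        rw [hvol]; gcongr; exact Set.inter_subset_right
    _ = ENNReal.ofReal (200 * ρ * t) := by
        rw [Real.volume_pi_closedBall _ (sqrt_nonneg _), Fintype.card_fin, mul_pow,
          sq_sqrt (by positivity),
          show ((5 : ℝ≥0) : ℝ≥0∞) ^ (2 : ℝ) = ENNReal.ofReal 25 by norm_num,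
          ← ENNReal.ofReal_mul (by norm_num)]
        ring_nf

lemma LinearIsometryEquiv.preimage_sphericalCap {E F : Type*} [NormedAddCommGroup E]
    [InnerProductSpace ℝ E] [NormedAddCommGroup F] [InnerProductSpace ℝ F] (f : E ≃ₗᵢ[ℝ] F)
    (e : E) (ρ t : ℝ) : f ⁻¹' sphericalCap (f e) ρ t = sphericalCap e ρ t := by
  ext y
  simp [sphericalCap, f.inner_map_map]

lemma hausdorffMeasure_sphericalCap_le_of_le_half {e : ℝ³} (he : ‖e‖ = 1) {ρ t : ℝ} (hρ : 0 < ρ)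
    (ht : 0 ≤ t) (htρ : t ≤ ρ / 2) :
    μH[2] (sphericalCap e ρ t) ≤ ENNReal.ofReal (200 * ρ * t) := by
  let R := Submodule.reflection (ℝ ∙ (e - EuclideanSpace.single 0 1))ᗮ
  have hR : R e = EuclideanSpace.single 0 1 := Submodule.reflection_sub (by simp [he])
  rw [← R.preimage_sphericalCap, hR]
  exact (R.toIsometryEquiv.hausdorffMeasure_preimage 2 _).trans_le
    (hausdorffMeasure_sphericalCap_single_le hρ ht htρ)

lemma sphere_subset_iUnion_sphericalCap (ρ : ℝ) :
    sphere (0 : ℝ³) ρ ⊆ ⋃ i : Fin 3, (sphericalCap (EuclideanSpace.single i 1) ρ (ρ / 2) ∪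
      sphericalCap (-EuclideanSpace.single i 1) ρ (ρ / 2)) := by
  intro y hy
  rw [mem_sphere_zero_iff_norm] at hy
  have hnorm : y 0 ^ 2 + y 1 ^ 2 + y 2 ^ 2 = ρ ^ 2 := by
    rw [← hy, EuclideanSpace.real_norm_sq_eq, Fin.sum_univ_three]
  obtain ⟨i, hi⟩ : ∃ i, ρ / 2 ≤ |y i| := by
    by_contra! h
    have hsq : ∀ i, y i ^ 2 < (ρ / 2) ^ 2 := fun i =>
      sq_lt_sq' (by linarith [neg_abs_le (y i), h i]) ((le_abs_self _).trans_lt (h i))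
    nlinarith [hsq 0, hsq 1, hsq 2]
  refine Set.mem_iUnion.2 ⟨i, ?_⟩
  simp only [sphericalCap, inner_neg_left, EuclideanSpace.inner_single_left, map_one, one_mul]
  rcases le_abs'.1 hi with h | h
  · exact Or.inr ⟨hy, by linarith⟩
  · exact Or.inl ⟨hy, by linarith⟩

lemma hausdorffMeasure_sphere_le {ρ : ℝ} (hρ : 0 < ρ) :
    μH[2] (sphere (0 : ℝ³) ρ) ≤ ENNReal.ofReal (600 * ρ ^ 2) := by
  have hcap : ∀ e : ℝ³, ‖e‖ = 1 → μH[2] (sphericalCap e ρ (ρ / 2)) ≤ ENNReal.ofReal (100 * ρ ^ 2) :=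
    fun e he => (hausdorffMeasure_sphericalCap_le_of_le_half he hρ (by positivity) le_rfl).trans_eq
      (by ring_nf)
  calc μH[2] (sphere (0 : ℝ³) ρ)
      ≤ ∑ i : Fin 3, μH[2] (sphericalCap (EuclideanSpace.single i 1) ρ (ρ / 2) ∪
          sphericalCap (-EuclideanSpace.single i 1) ρ (ρ / 2)) :=
        (measure_mono (sphere_subset_iUnion_sphericalCap ρ)).trans (measure_iUnion_fintype_le _ _)
    _ ≤ ∑ _i : Fin 3, (ENNReal.ofReal (100 * ρ ^ 2) + ENNReal.ofReal (100 * ρ ^ 2)) := by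
        gcongr with i
        exact (measure_union_le _ _).trans (add_le_add (hcap _ (by simp)) (hcap _ (by simp)))
    _ = ENNReal.ofReal (600 * ρ ^ 2) := by
        rw [← ENNReal.ofReal_add (by positivity) (by positivity), Finset.sum_const,
          Finset.card_univ, Fintype.card_fin, nsmul_eq_mul, ← ENNReal.ofReal_natCast,
          ← ENNReal.ofReal_mul (by norm_num)]
        ring_nf

lemma hausdorffMeasure_sphericalCap_le {e : ℝ³} (he : ‖e‖ = 1) {ρ t : ℝ} (hρ : 0 < ρ)
    (ht : 0 ≤ t) : μH[2] (sphericalCap e ρ t) ≤ ENNReal.ofReal (1200 * ρ * t) := by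
  rcases le_or_gt t (ρ / 2) with htρ | htρ
  · exact (hausdorffMeasure_sphericalCap_le_of_le_half he hρ ht htρ).trans
      (ENNReal.ofReal_le_ofReal (by nlinarith))
  · calc μH[2] (sphericalCap e ρ t) ≤ μH[2] (sphere (0 : ℝ³) ρ) :=
          measure_mono fun y hy => mem_sphere_zero_iff_norm.2 hy.1
      _ ≤ ENNReal.ofReal (1200 * ρ * t) :=
          (hausdorffMeasure_sphere_le hρ).trans (ENNReal.ofReal_le_ofReal (by nlinarith))

lemma integrableOn_sphere_exp_inner_sub {e : ℝ³} (he : ‖e‖ = 1) {ρ : ℝ} (hρ : 0 < ρ) :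
    IntegrableOn (fun y => exp (⟪e, y⟫ - ρ)) (sphere (0 : ℝ³) ρ) μH[2] := by
  refine Measure.integrableOn_of_bounded (M := 1)
    ((hausdorffMeasure_sphere_le hρ).trans_lt ENNReal.ofReal_lt_top).ne
    (by fun_prop) ((ae_restrict_iff' isClosed_sphere.measurableSet).2 (ae_of_all _ fun y hy => ?_))
  rw [norm_of_nonneg (exp_pos _).le, exp_le_one_iff, sub_nonpos]
  exact inner_le_of_mem_sphere he hy

lemma integral_sphere_exp_inner_sub_le {e : ℝ³} (he : ‖e‖ = 1) {ρ : ℝ} (hρ : 0 < ρ) :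
    ∫ y in sphere (0 : ℝ³) ρ, exp (⟪e, y⟫ - ρ) ∂μH[2] ≤ 1200 * ρ := by
  refine integral_le_of_measureReal_lt_le_mul_neg_log (integrableOn_sphere_exp_inner_sub he hρ)
    (ae_of_all _ fun _ => (exp_pos _).le) ?_ fun s hs => ?_
  · exact (ae_restrict_iff' isClosed_sphere.measurableSet).2
      (ae_of_all _ fun y hy => exp_le_one_iff.2 (sub_nonpos.2 (inner_le_of_mem_sphere he hy)))
  · have hsub : {y | s < exp (⟪e, y⟫ - ρ)} ∩ sphere 0 ρ ⊆ sphericalCap e ρ (-log s) := by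
      rintro y ⟨hy, hyρ⟩
      refine ⟨mem_sphere_zero_iff_norm.1 hyρ, ?_⟩
      have := (log_lt_iff_lt_exp hs.1).2 hy
      linarith
    have hlog : 0 ≤ -log s := neg_nonneg.2 (log_nonpos hs.1.le hs.2)
    rw [measureReal_def, Measure.restrict_apply' isClosed_sphere.measurableSet]
    exact ENNReal.toReal_le_of_le_ofReal (by positivity)
      ((measure_mono hsub).trans (hausdorffMeasure_sphericalCap_le he hρ hlog))

theorem stmt14 :
    ∃ C > (0 : ℝ), ∀ (x : EuclideanSpace ℝ (Fin 3)) (ρ : ℝ), 1 < ρ → ρ ≤ 2 * ‖x‖ / 3 →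
      (∫ y in Metric.sphere (0 : EuclideanSpace ℝ (Fin 3)) ρ,
          Real.exp (-‖x - y‖ - ‖y‖) ∂(μH[2])) ≤ C * ρ * Real.exp (-‖x‖) := by
  refine ⟨1200, by norm_num, fun x ρ hρ hρx => ?_⟩
  have hρ0 : 0 < ρ := by linarith
  have hx : x ≠ 0 := by rintro rfl; simp at hρx; linarith
  set e := ‖x‖⁻¹ • x
  have he : ‖e‖ = 1 := norm_smul_inv_norm hx
  have hpoint : ∀ y ∈ sphere (0 : ℝ³) ρ, exp (-‖x - y‖ - ‖y‖) ≤ exp (-‖x‖) * exp (⟪e, y⟫ - ρ) := by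
    intro y hy
    rw [← exp_add, exp_le_exp, mem_sphere_zero_iff_norm.1 hy]
    linarith [norm_sub_inner_le_norm_sub x y]
  calc ∫ y in sphere (0 : ℝ³) ρ, exp (-‖x - y‖ - ‖y‖) ∂μH[2]
      ≤ ∫ y in sphere (0 : ℝ³) ρ, exp (-‖x‖) * exp (⟪e, y⟫ - ρ) ∂μH[2] :=
        integral_mono_of_nonneg (ae_of_all _ fun _ => (exp_pos _).le)
          ((integrableOn_sphere_exp_inner_sub he hρ0).const_mul _)
          ((ae_restrict_iff' isClosed_sphere.measurableSet).2 (ae_of_all _ hpoint))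
    _ = exp (-‖x‖) * ∫ y in sphere (0 : ℝ³) ρ, exp (⟪e, y⟫ - ρ) ∂μH[2] := integral_const_mul _ _
    _ ≤ exp (-‖x‖) * (1200 * ρ) := by gcongr; exact integral_sphere_exp_inner_sub_le he hρ0
    _ = 1200 * ρ * exp (-‖x‖) := mul_comm _ _
end

section
/- There exists a constant C such that for all x ∈ ℝ³ and all ρ with 1 < ρ ≤ 2|x|/3, ∫_{|y|=ρ} e^{−|x−y|−|y|} sin²ζ(x,y) dτ_y ≤ C e^{−|x|}, where ζ(x,y) is the angle between x and y. -/
/-!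
Write `u = x / ‖x‖`, `ρ = ‖y‖` and `s = ⟪u, y⟫`. Cauchy–Schwarz against `u` gives
`‖x - y‖ ≥ ‖x‖ - s`, and `sin² ζ = (ρ - s)(ρ + s) / ρ² ≤ 2 (ρ - s) / ρ`; since
`w e^{-w} ≤ e^{-w/2}`, the integrand is at most `2 e^{-‖x‖} ρ⁻¹ e^{-(ρ - s)/2}`.

The integral of `ρ⁻¹ e^{-(ρ - s)/2}` over the sphere of radius `ρ` is bounded independently of
`ρ`. On the cap `s ≥ 4ρ/5`, written as a graph over a square of side `~ρ` by a chart whose Lipschitz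
constant does not depend on `ρ` (by scaling), one has `ρ - s ≥ |p|² / 2ρ`, so the integrand is
dominated by a Gaussian of total mass `4π`. Off the cap the integrand is at most `ρ⁻¹ e^{-ρ/10}`,
while the sphere has Hausdorff measure `ρ² μH[2](S²)`, which is finite since `S²` is a Lipschitz
image of a square.
-/

set_option autoImplicit false

open MeasureTheory InnerProductGeometry Real Metric
open scoped ENNReal NNReal RealInnerProductSpace

theorem LipschitzOnWith.setLIntegral_hausdorffMeasure_le {ι X : Type*} [Fintype ι]
    [EMetricSpace X] [MeasurableSpace X] [BorelSpace X] {Φ : (ι → ℝ) → X} {D : Set (ι → ℝ)}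
    {L : ℝ≥0} (hΦ : LipschitzOnWith L Φ D) (hΦm : Measurable Φ) {T : Set X} (hT : T ⊆ Φ '' D)
    (f : X → ℝ≥0∞) :
    ∫⁻ y in T, f y ∂μH[Fintype.card ι] ≤ (L : ℝ≥0∞) ^ Fintype.card ι * ∫⁻ p in D, f (Φ p) := by
  have hμ : (μH[Fintype.card ι] : Measure X).restrict T ≤
      ((L : ℝ≥0∞) ^ Fintype.card ι) • (volume.restrict D).map Φ := by
    refine Measure.le_iff.2 fun s hs => ?_
    rw [Measure.restrict_apply hs, Measure.smul_apply, smul_eq_mul,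
      Measure.map_apply hΦm hs, Measure.restrict_apply (hΦm hs), ← hausdorffMeasure_pi_real,
      ← ENNReal.rpow_natCast]
    calc μH[Fintype.card ι] (s ∩ T) ≤ μH[Fintype.card ι] (Φ '' (Φ ⁻¹' s ∩ D)) := by
          refine measure_mono fun y ⟨hys, hyT⟩ => ?_
          obtain ⟨p, hpD, rfl⟩ := hT hyT
          exact ⟨p, ⟨hys, hpD⟩, rfl⟩
      _ ≤ _ := (hΦ.mono Set.inter_subset_right).hausdorffMeasure_image_le (Nat.cast_nonneg _)
  calc ∫⁻ y in T, f y ∂μH[Fintype.card ι]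
      ≤ ∫⁻ y, f y ∂(((L : ℝ≥0∞) ^ Fintype.card ι) • (volume.restrict D).map Φ) :=
        lintegral_mono' hμ le_rfl
    _ ≤ _ := by
        rw [lintegral_smul_measure, smul_eq_mul]
        gcongr
        exact lintegral_map_le _ _

theorem hausdorffMeasure_sphere_zero {E : Type*} [NormedAddCommGroup E] [NormedSpace ℝ E]
    [MeasurableSpace E] [BorelSpace E] {d : ℝ} (hd : 0 ≤ d) {r : ℝ} (hr : 0 < r) :
    μH[d] (sphere (0 : E) r) = ENNReal.ofReal (r ^ d) * μH[d] (sphere (0 : E) 1) := by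
  have h := smul_sphere' hr.ne' (0 : E) 1
  rw [smul_zero, Real.norm_of_nonneg hr.le, mul_one] at h
  rw [← h, Measure.hausdorffMeasure_smul₀ hd hr.ne', ENNReal.smul_def, smul_eq_mul,
    ENNReal.coe_rpow_of_nonneg _ hd, Real.nnnorm_of_nonneg hr.le,
    ← ENNReal.ofReal_rpow_of_nonneg hr.le hd, ENNReal.ofReal_eq_coe_nnreal hr.le]

theorem lintegral_exp_neg_mul_sum_sq {ι : Type*} [Fintype ι] {c : ℝ} (hc : 0 < c) :
    ∫⁻ p : ι → ℝ, ENNReal.ofReal (rexp (-c * ∑ i, p i ^ 2)) =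
      ENNReal.ofReal (√(π / c) ^ Fintype.card ι) := by
  have hprod : ∀ p : ι → ℝ, rexp (-c * ∑ i, p i ^ 2) = ∏ i, rexp (-c * p i ^ 2) := fun p => by
    rw [Finset.mul_sum, Real.exp_sum]
  simp_rw [hprod]
  rw [← ofReal_integral_eq_lintegral_ofReal,
    integral_fintype_prod_volume_eq_pow (fun x : ℝ => rexp (-c * x ^ 2)), integral_gaussian]
  · exact Integrable.fintype_prod (f := fun _ x => rexp (-c * x ^ 2))
      fun _ => integrable_exp_neg_mul_sq hc
  · exact Filter.Eventually.of_forall fun p => by positivity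

theorem setIntegral_le_mul_of_lintegral_le {α : Type*} [MeasurableSpace α] {μ : Measure α}
    {s : Set α} (hs : MeasurableSet s) {f : α → ℝ} {g : α → ℝ≥0∞} {c C : ℝ} (hc : 0 ≤ c)
    (hC : 0 ≤ C) (hfg : ∀ y ∈ s, ENNReal.ofReal ‖f y‖ ≤ ENNReal.ofReal c * g y)
    (hg : ∫⁻ y in s, g y ∂μ ≤ ENNReal.ofReal C) :
    ∫ y in s, f y ∂μ ≤ c * C := by
  have h : ∫⁻ y in s, ENNReal.ofReal ‖f y‖ ∂μ ≤ ENNReal.ofReal (c * C) := by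
    calc ∫⁻ y in s, ENNReal.ofReal ‖f y‖ ∂μ ≤ ∫⁻ y in s, ENNReal.ofReal c * g y ∂μ :=
          setLIntegral_mono' hs hfg
      _ ≤ ENNReal.ofReal c * ENNReal.ofReal C := by
          rw [lintegral_const_mul' _ _ ENNReal.ofReal_ne_top]
          gcongr
      _ = ENNReal.ofReal (c * C) := (ENNReal.ofReal_mul hc).symm
  exact (le_norm_self _).trans <|
    (norm_integral_le_lintegral_norm _).trans (ENNReal.toReal_le_of_le_ofReal (by positivity) h)

theorem mul_exp_neg_le_exp_neg_half {w : ℝ} (hw : 0 ≤ w) : w * rexp (-w) ≤ rexp (-w / 2) := by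
  have h : w ≤ rexp (w / 2) := by
    calc w ≤ (w / 4 + 1) ^ 2 := by nlinarith [sq_nonneg (w / 4 - 1)]
      _ ≤ rexp (w / 4) ^ 2 := by gcongr; exact add_one_le_exp _
      _ = rexp (w / 2) := by rw [← exp_nat_mul]; ring_nf
  calc w * rexp (-w) ≤ rexp (w / 2) * rexp (-w) := by gcongr
    _ = rexp (-w / 2) := by rw [← exp_add]; ring_nf

theorem div_two_mul_le_sub_sqrt {ρ n : ℝ} (hρ : 0 < ρ) (hn : n ≤ 2 * ρ ^ 2) :
    n / (2 * ρ) ≤ ρ - √(ρ ^ 2 - n) := by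
  have h : √(ρ ^ 2 - n) ≤ ρ - n / (2 * ρ) := by
    rw [sqrt_le_iff]
    constructor
    · rw [sub_nonneg, div_le_iff₀ (by positivity)]
      nlinarith
    · have : (ρ - n / (2 * ρ)) ^ 2 = ρ ^ 2 - n + (n / (2 * ρ)) ^ 2 := by
        field_simp
        ring
      nlinarith [sq_nonneg (n / (2 * ρ))]
  linarith

theorem exp_neg_norm_sub_mul_sin_angle_sq_le {V : Type*} [NormedAddCommGroup V]
    [InnerProductSpace ℝ V] {x y : V} (hx : x ≠ 0) (hy : y ≠ 0) :
    rexp (-‖x - y‖ - ‖y‖) * sin (angle x y) ^ 2 ≤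
      2 * rexp (-‖x‖) * (‖y‖⁻¹ * rexp (-(‖y‖ - ⟪‖x‖⁻¹ • x, y⟫) / 2)) := by
  set u := ‖x‖⁻¹ • x
  set s := ⟪u, y⟫
  have hu : ‖u‖ = 1 := norm_smul_inv_norm hx
  have hx' : 0 < ‖x‖ := norm_pos_iff.2 hx
  have hy' : 0 < ‖y‖ := norm_pos_iff.2 hy
  obtain ⟨hs₁, hs₂⟩ : -‖y‖ ≤ s ∧ s ≤ ‖y‖ :=
    abs_le.1 (by simpa [hu] using abs_real_inner_le_norm u y)
  have hux : ⟪u, x⟫ = ‖x‖ := by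
    rw [real_inner_smul_left, real_inner_self_eq_norm_sq]
    field_simp
  have hdist : ‖x‖ - s ≤ ‖x - y‖ := by
    simpa [inner_sub_right, hux, hu] using real_inner_le_norm u (x - y)
  have hsin : sin (angle x y) ^ 2 ≤ 2 * ((‖y‖ - s) / ‖y‖) := by
    have hcos : cos (angle x y) = s / ‖y‖ := by
      simp only [cos_angle, s, u, real_inner_smul_left]
      field_simp
    have h : 2 * ((‖y‖ - s) / ‖y‖) - (1 - (s / ‖y‖) ^ 2) = (‖y‖ - s) ^ 2 / ‖y‖ ^ 2 := by
      field_simp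
      ring
    rw [sin_sq, hcos, ← sub_nonneg, h]
    positivity
  calc rexp (-‖x - y‖ - ‖y‖) * sin (angle x y) ^ 2
      ≤ rexp (-‖x‖ - (‖y‖ - s)) * (2 * ((‖y‖ - s) / ‖y‖)) :=
        mul_le_mul (exp_le_exp.2 (by linarith)) hsin (sq_nonneg _) (by positivity)
    _ = 2 * rexp (-‖x‖) * (‖y‖⁻¹ * ((‖y‖ - s) * rexp (-(‖y‖ - s)))) := by
        rw [sub_eq_add_neg (-‖x‖), exp_add]
        ring
    _ ≤ 2 * rexp (-‖x‖) * (‖y‖⁻¹ * rexp (-(‖y‖ - s) / 2)) := by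
        gcongr
        exact mul_exp_neg_le_exp_neg_half (by linarith)

local notation "ℝ³" => EuclideanSpace ℝ (Fin 3)

theorem EuclideanSpace.sq_add_sq_add_sq_of_norm_eq {v : ℝ³} {r : ℝ} (h : ‖v‖ = r) :
    v 0 ^ 2 + v 1 ^ 2 + v 2 ^ 2 = r ^ 2 := by
  simpa [Fin.sum_univ_three, h] using (EuclideanSpace.norm_sq_eq v).symm

noncomputable def sphericalCoords (q : Fin 2 → ℝ) : ℝ³ :=
  !₂[sin (q 0) * cos (q 1), sin (q 0) * sin (q 1), cos (q 0)]

theorem contDiff_sphericalCoords : ContDiff ℝ 1 sphericalCoords := by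
  refine (contDiff_piLp 2).2 fun i => ?_
  fin_cases i <;> simp [sphericalCoords] <;> fun_prop

theorem sphere_subset_image_sphericalCoords :
    sphere (0 : ℝ³) 1 ⊆ sphericalCoords '' Set.univ.pi fun _ => Set.Icc (-π) π := by
  intro ω hω
  have hsum := EuclideanSpace.sq_add_sq_add_sq_of_norm_eq (mem_sphere_zero_iff_norm.1 hω)
  have h2 : |ω 2| ≤ 1 := abs_le_one_iff_mul_self_le_one.2 (by nlinarith)
  set z : ℂ := ⟨ω 0, ω 1⟩
  have hsin : sin (arccos (ω 2)) = ‖z‖ := by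
    rw [sin_arccos, Complex.norm_def, Complex.normSq_mk]
    congr 1
    linarith
  refine ⟨![arccos (ω 2), z.arg], ?_, ?_⟩
  · simp only [Set.mem_univ_pi, Fin.forall_fin_two, Matrix.cons_val_zero, Matrix.cons_val_one]
    exact ⟨⟨by linarith [arccos_nonneg (ω 2), pi_pos], arccos_le_pi _⟩,
      ⟨(Complex.neg_pi_lt_arg z).le, Complex.arg_le_pi z⟩⟩
  · ext i
    fin_cases i
    · simp [sphericalCoords, hsin, Complex.norm_mul_cos_arg, z]
    · simp [sphericalCoords, hsin, Complex.norm_mul_sin_arg, z]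
    · simp [sphericalCoords, cos_arccos (abs_le.1 h2).1 (abs_le.1 h2).2]

theorem hausdorffMeasure_unitSphere_ne_top : μH[2] (sphere (0 : ℝ³) 1) ≠ ∞ := by
  set B : Set (Fin 2 → ℝ) := Set.univ.pi fun _ => Set.Icc (-π) π
  have hB : IsCompact B := isCompact_univ_pi fun _ => isCompact_Icc
  obtain ⟨K, hK⟩ := contDiff_sphericalCoords.contDiffOn.exists_lipschitzOnWith one_ne_zero
    (convex_pi fun _ _ => convex_Icc _ _) hB
  refine ne_top_of_le_ne_top ?_ (measure_mono sphere_subset_image_sphericalCoords)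
  refine ne_top_of_le_ne_top ?_ (hK.hausdorffMeasure_image_le zero_le_two)
  rw [show (2 : ℝ) = Fintype.card (Fin 2) by simp, hausdorffMeasure_pi_real]
  exact ENNReal.mul_ne_top (by simp) hB.measure_ne_top

/- `closedBall 0 (3 / 5 * ρ)` in the sup norm of `Fin 2 → ℝ` is a square on which
`∑ i, p i ^ 2 ≤ 18 ρ² / 25 < ρ²`, so the chart is smooth there; it covers the cap `y₀ ≥ 4ρ/5`. -/
noncomputable def capChart (ρ : ℝ) (p : Fin 2 → ℝ) : ℝ³ :=
  !₂[√(ρ ^ 2 - ∑ i, p i ^ 2), p 0, p 1]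

theorem continuous_capChart (ρ : ℝ) : Continuous (capChart ρ) := by
  refine (PiLp.continuous_toLp 2 _).comp (continuous_pi fun i => ?_)
  fin_cases i <;> simp <;> fun_prop

theorem capChart_smul {ρ : ℝ} (hρ : 0 ≤ ρ) (p : Fin 2 → ℝ) :
    capChart ρ (ρ • p) = ρ • capChart 1 p := by
  have h : √(ρ ^ 2 - ((ρ * p 0) ^ 2 + (ρ * p 1) ^ 2)) = ρ * √(1 - (p 0 ^ 2 + p 1 ^ 2)) := by
    rw [show ρ ^ 2 - ((ρ * p 0) ^ 2 + (ρ * p 1) ^ 2) = ρ ^ 2 * (1 - (p 0 ^ 2 + p 1 ^ 2)) by ring,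
      sqrt_mul (sq_nonneg ρ), sqrt_sq hρ]
  ext i
  fin_cases i <;> simp [capChart, Fin.sum_univ_two, h]

theorem contDiffOn_capChart_one : ContDiffOn ℝ 1 (capChart 1) (closedBall 0 (3 / 5)) := by
  intro p hp
  rw [mem_closedBall_zero_iff, pi_norm_le_iff_of_nonneg (by norm_num)] at hp
  have hpos : 0 < 1 ^ 2 - ∑ i, p i ^ 2 := by
    simp only [Real.norm_eq_abs, abs_le] at hp
    simp only [Fin.sum_univ_two]
    nlinarith [hp 0, hp 1]
  refine ContDiffAt.contDiffWithinAt <| (contDiffAt_piLp 2).2 fun i => ?_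
  fin_cases i
  · exact ContDiffAt.sqrt (by fun_prop) hpos.ne'
  all_goals simp [capChart]; fun_prop

theorem exists_lipschitzOnWith_capChart :
    ∃ K, ∀ ρ, 0 < ρ → LipschitzOnWith K (capChart ρ) (closedBall 0 (3 / 5 * ρ)) := by
  obtain ⟨K, hK⟩ := contDiffOn_capChart_one.exists_lipschitzOnWith one_ne_zero
    (convex_closedBall _ _) (isCompact_closedBall _ _)
  refine ⟨K, fun ρ hρ => ?_⟩
  have hmaps : Set.MapsTo (fun p => ρ⁻¹ • p) (closedBall (0 : Fin 2 → ℝ) (3 / 5 * ρ))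
      (closedBall 0 (3 / 5)) := by
    intro p hp
    rw [mem_closedBall_zero_iff] at hp ⊢
    rw [norm_smul, norm_inv, Real.norm_of_nonneg hρ.le, inv_mul_le_iff₀ hρ]
    linarith
  have h := (lipschitzWith_smul ρ).comp_lipschitzOnWith
    (hK.comp (lipschitzWith_smul ρ⁻¹).lipschitzOnWith hmaps)
  have hfun : capChart ρ = (fun y => ρ • y) ∘ capChart 1 ∘ fun p => ρ⁻¹ • p := by
    ext1 p
    simp [← capChart_smul hρ.le, smul_smul, hρ.ne']
  rw [hfun]
  refine h.weaken (le_of_eq ?_)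
  rw [nnnorm_inv, mul_comm, mul_assoc, inv_mul_cancel₀ (by simpa using hρ.ne'), mul_one]

theorem setLIntegral_sphere_inter_cap_le {K : ℝ≥0} {ρ : ℝ} (hρ : 0 < ρ)
    (hK : LipschitzOnWith K (capChart ρ) (closedBall 0 (3 / 5 * ρ))) {u : ℝ³} (hu : ‖u‖ = 1)
    (f : ℝ → ℝ≥0∞) :
    ∫⁻ y in sphere (0 : ℝ³) ρ ∩ {y | 4 / 5 * ρ ≤ ⟪u, y⟫}, f ⟪u, y⟫ ∂μH[2] ≤
      K ^ 2 * ∫⁻ p in closedBall (0 : Fin 2 → ℝ) (3 / 5 * ρ), f √(ρ ^ 2 - ∑ i, p i ^ 2) := by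
  set R : ℝ³ ≃ₗᵢ[ℝ] ℝ³ := Submodule.reflection (ℝ ∙ (EuclideanSpace.single 0 1 - u))ᗮ
  have hR : R (EuclideanSpace.single 0 1) = u := Submodule.reflection_sub (by simp [hu])
  have hinner : ∀ v, ⟪u, R v⟫ = v 0 := fun v => by
    rw [← hR, R.inner_map_map, EuclideanSpace.inner_single_left]
    simp
  have hsub : sphere (0 : ℝ³) ρ ∩ {y | 4 / 5 * ρ ≤ ⟪u, y⟫} ⊆
      (R ∘ capChart ρ) '' closedBall 0 (3 / 5 * ρ) := by
    rintro y ⟨hy, hyu⟩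
    set v := R.symm y
    have hv : v 0 ^ 2 + v 1 ^ 2 + v 2 ^ 2 = ρ ^ 2 := by
      refine EuclideanSpace.sq_add_sq_add_sq_of_norm_eq ?_
      rwa [R.symm.norm_map, ← mem_sphere_zero_iff_norm]
    have hv0 : 4 / 5 * ρ ≤ v 0 := by rwa [← hinner, R.apply_symm_apply]
    refine ⟨![v 1, v 2], ?_, ?_⟩
    · rw [mem_closedBall_zero_iff, pi_norm_le_iff_of_nonneg (by positivity)]
      intro i
      fin_cases i <;> simp [Real.norm_eq_abs, abs_le] <;> constructor <;> nlinarith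
    · have : √(ρ ^ 2 - (v 1 ^ 2 + v 2 ^ 2)) = v 0 := by
        rw [show ρ ^ 2 - (v 1 ^ 2 + v 2 ^ 2) = v 0 ^ 2 by linarith, sqrt_sq (by linarith)]
      rw [Function.comp_apply, ← R.apply_symm_apply y]
      congr 1
      ext i
      fin_cases i <;> simp [capChart, Fin.sum_univ_two, this, v]
  have h := (R.lipschitz.comp_lipschitzOnWith hK).setLIntegral_hausdorffMeasure_le
    (R.continuous.comp (continuous_capChart ρ)).measurable hsub (fun y => f ⟪u, y⟫)
  simpa [hinner, capChart] using h

theorem setLIntegral_sphere_inter_cap_exp_le {K : ℝ≥0} {ρ : ℝ} (hρ : 0 < ρ)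
    (hK : LipschitzOnWith K (capChart ρ) (closedBall 0 (3 / 5 * ρ))) {u : ℝ³} (hu : ‖u‖ = 1) :
    ∫⁻ y in sphere (0 : ℝ³) ρ ∩ {y | 4 / 5 * ρ ≤ ⟪u, y⟫},
        ENNReal.ofReal (ρ⁻¹ * rexp (-(ρ - ⟪u, y⟫) / 2)) ∂μH[2] ≤
      ENNReal.ofReal (K ^ 2 * (4 * π)) := by
  refine (setLIntegral_sphere_inter_cap_le hρ hK hu
    fun t => ENNReal.ofReal (ρ⁻¹ * rexp (-(ρ - t) / 2))).trans ?_
  have hpt : ∀ p ∈ closedBall (0 : Fin 2 → ℝ) (3 / 5 * ρ),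
      ENNReal.ofReal (ρ⁻¹ * rexp (-(ρ - √(ρ ^ 2 - ∑ i, p i ^ 2)) / 2)) ≤
        ENNReal.ofReal (ρ⁻¹ * rexp (-(4 * ρ)⁻¹ * ∑ i, p i ^ 2)) := by
    intro p hp
    rw [mem_closedBall_zero_iff, pi_norm_le_iff_of_nonneg (by positivity)] at hp
    have hn : ∑ i, p i ^ 2 ≤ 2 * ρ ^ 2 := by
      simp only [Real.norm_eq_abs, Fin.forall_fin_two] at hp
      simp only [Fin.sum_univ_two]
      nlinarith [sq_abs (p 0), sq_abs (p 1), abs_nonneg (p 0), abs_nonneg (p 1)]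
    have := div_two_mul_le_sub_sqrt hρ hn
    refine ENNReal.ofReal_le_ofReal (mul_le_mul_of_nonneg_left (exp_le_exp.2 ?_) (by positivity))
    rw [show -(4 * ρ)⁻¹ * ∑ i, p i ^ 2 = -((∑ i, p i ^ 2) / (2 * ρ)) / 2 by field_simp; ring]
    linarith
  calc _ ≤ K ^ 2 * ∫⁻ p : Fin 2 → ℝ, ENNReal.ofReal (ρ⁻¹ * rexp (-(4 * ρ)⁻¹ * ∑ i, p i ^ 2)) := by
        gcongr (K : ℝ≥0∞) ^ 2 * ?_
        exact (setLIntegral_mono' measurableSet_closedBall hpt).trans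
          (setLIntegral_le_lintegral _ _)
    _ = K ^ 2 * ENNReal.ofReal (4 * π) := by
        simp_rw [ENNReal.ofReal_mul (inv_nonneg.2 hρ.le)]
        rw [lintegral_const_mul' _ _ ENNReal.ofReal_ne_top,
          lintegral_exp_neg_mul_sum_sq (by positivity), ← ENNReal.ofReal_mul (by positivity),
          Fintype.card_fin, sq_sqrt (by positivity)]
        congr 2
        field_simp
    _ = ENNReal.ofReal (K ^ 2 * (4 * π)) := by
        rw [ENNReal.ofReal_mul (by positivity : (0 : ℝ) ≤ K ^ 2),
          ENNReal.ofReal_pow K.coe_nonneg, ENNReal.ofReal_coe_nnreal]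

theorem setLIntegral_sphere_diff_cap_exp_le {ρ : ℝ} (hρ : 0 < ρ) (u : ℝ³) :
    ∫⁻ y in sphere (0 : ℝ³) ρ ∩ {y | ⟪u, y⟫ ≤ 4 / 5 * ρ},
        ENNReal.ofReal (ρ⁻¹ * rexp (-(ρ - ⟪u, y⟫) / 2)) ∂μH[2] ≤
      ENNReal.ofReal (10 * (μH[2] (sphere (0 : ℝ³) 1)).toReal) := by
  set M := (μH[2] (sphere (0 : ℝ³) 1)).toReal
  set A := sphere (0 : ℝ³) ρ ∩ {y | ⟪u, y⟫ ≤ 4 / 5 * ρ}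
  have hA : MeasurableSet A :=
    (isClosed_sphere.inter (isClosed_le (by fun_prop) continuous_const)).measurableSet
  have hpt : ∀ y ∈ A, ENNReal.ofReal (ρ⁻¹ * rexp (-(ρ - ⟪u, y⟫) / 2)) ≤
      ENNReal.ofReal (ρ⁻¹ * rexp (-(ρ / 10))) := by
    rintro y ⟨-, hy : ⟪u, y⟫ ≤ 4 / 5 * ρ⟩
    refine ENNReal.ofReal_le_ofReal (mul_le_mul_of_nonneg_left (exp_le_exp.2 ?_) (by positivity))
    linarith
  have hdecay : ρ * rexp (-(ρ / 10)) ≤ 10 := by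
    rw [exp_neg, ← div_eq_mul_inv, div_le_iff₀ (exp_pos _)]
    linarith [add_one_le_exp (ρ / 10)]
  have hM : μH[2] (sphere (0 : ℝ³) 1) = ENNReal.ofReal M :=
    (ENNReal.ofReal_toReal hausdorffMeasure_unitSphere_ne_top).symm
  calc _ ≤ ENNReal.ofReal (ρ⁻¹ * rexp (-(ρ / 10))) * μH[2] A :=
        (setLIntegral_mono' hA hpt).trans_eq (setLIntegral_const _ _)
    _ ≤ ENNReal.ofReal (ρ⁻¹ * rexp (-(ρ / 10))) *
          (ENNReal.ofReal (ρ ^ (2 : ℝ)) * ENNReal.ofReal M) := by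
        rw [← hM, ← hausdorffMeasure_sphere_zero zero_le_two hρ]
        gcongr
        exact Set.inter_subset_left
    _ = ENNReal.ofReal (ρ * rexp (-(ρ / 10)) * M) := by
        rw [← ENNReal.ofReal_mul (by positivity), ← ENNReal.ofReal_mul (by positivity), rpow_two]
        congr 1
        field_simp
    _ ≤ ENNReal.ofReal (10 * M) := by
        gcongr

theorem exists_setLIntegral_sphere_exp_inner_le : ∃ C, 0 ≤ C ∧ ∀ u : ℝ³, ‖u‖ = 1 → ∀ ρ, 0 < ρ →
    ∫⁻ y in sphere (0 : ℝ³) ρ, ENNReal.ofReal (ρ⁻¹ * rexp (-(ρ - ⟪u, y⟫) / 2)) ∂μH[2] ≤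
      ENNReal.ofReal C := by
  obtain ⟨K, hK⟩ := exists_lipschitzOnWith_capChart
  refine ⟨K ^ 2 * (4 * π) + 10 * (μH[2] (sphere (0 : ℝ³) 1)).toReal, by positivity,
    fun u hu ρ hρ => ?_⟩
  calc _ ≤ ∫⁻ y in (sphere (0 : ℝ³) ρ ∩ {y | 4 / 5 * ρ ≤ ⟪u, y⟫}) ∪
          (sphere (0 : ℝ³) ρ ∩ {y | ⟪u, y⟫ ≤ 4 / 5 * ρ}),
          ENNReal.ofReal (ρ⁻¹ * rexp (-(ρ - ⟪u, y⟫) / 2)) ∂μH[2] := by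
        refine lintegral_mono_set fun y hy => ?_
        rcases le_total (4 / 5 * ρ) ⟪u, y⟫ with h | h
        exacts [Or.inl ⟨hy, h⟩, Or.inr ⟨hy, h⟩]
    _ ≤ _ := (lintegral_union_le _ _ _).trans <| add_le_add
        (setLIntegral_sphere_inter_cap_exp_le hρ (hK ρ hρ) hu)
        (setLIntegral_sphere_diff_cap_exp_le hρ u)
    _ = _ := by rw [← ENNReal.ofReal_add (by positivity) (by positivity)]

theorem stmt15 :
    ∃ C > (0 : ℝ), ∀ (x : EuclideanSpace ℝ (Fin 3)) (ρ : ℝ), x ≠ 0 →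
      1 < ρ → ρ ≤ 2 * ‖x‖ / 3 →
      (∫ y in Metric.sphere (0 : EuclideanSpace ℝ (Fin 3)) ρ,
          Real.exp (-‖x - y‖ - ‖y‖) * Real.sin (angle x y) ^ 2 ∂(μH[2])) ≤
        C * Real.exp (-‖x‖) := by
  obtain ⟨C, hC₀, hC⟩ := exists_setLIntegral_sphere_exp_inner_le
  refine ⟨2 * C + 1, by positivity, fun x ρ hx hρ₁ _ => ?_⟩
  have hρ : 0 < ρ := by linarith
  have hpt : ∀ y ∈ sphere (0 : ℝ³) ρ,
      ENNReal.ofReal ‖rexp (-‖x - y‖ - ‖y‖) * sin (angle x y) ^ 2‖ ≤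
        ENNReal.ofReal (2 * rexp (-‖x‖)) *
          ENNReal.ofReal (ρ⁻¹ * rexp (-(ρ - ⟪‖x‖⁻¹ • x, y⟫) / 2)) := by
    intro y hy
    rw [mem_sphere_zero_iff_norm] at hy
    rw [← ENNReal.ofReal_mul (by positivity), Real.norm_of_nonneg (by positivity), ← hy]
    exact ENNReal.ofReal_le_ofReal
      (exp_neg_norm_sub_mul_sin_angle_sq_le hx (norm_pos_iff.1 (hy ▸ hρ)))
  calc _ ≤ 2 * rexp (-‖x‖) * C := setIntegral_le_mul_of_lintegral_le isClosed_sphere.measurableSet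
        (by positivity) hC₀ hpt (hC _ (norm_smul_inv_norm hx) ρ hρ)
    _ ≤ (2 * C + 1) * rexp (-‖x‖) := by nlinarith [exp_pos (-‖x‖)]
end
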